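/- arXiv:2205.12435 — 2 statements merged into one kernel-verified Lean document; each statement's English description precedes it below -/
import Mathlib

section
/- Let V = ℤ^{2g} with the standard symplectic form, and let G be the group of ℤ-linear automorphisms of V preserving the symplectic form (i.e. Sp_{2g}(ℤ)). Every G-invariant ℤ-submodule of V is of the form mV for some integer m ≥ 0. -/
open Finset Pointwise

/-- `V g = ℤ^{2g}`, written as pairs of `δ`- and `γ`-coordinates. -/
abbrev V (g : ℕ) : Type := (Fin g → ℤ) × (Fin g → ℤ)

/-- The standard symplectic form on `V g`. -/
def symp (g : ℕ) (v w : V g) : ℤ := ∑ i, (v.1 i * w.2 i - v.2 i * w.1 i)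

/-- A vector is primitive if the gcd of its coordinates is `1`. -/
def Primitive (g : ℕ) (v : V g) : Prop :=
  Finset.univ.gcd (fun i => Int.gcd (v.1 i) (v.2 i)) = 1

/-- The transvection along `β`. -/
def T (g : ℕ) (β α : V g) : V g := α + symp g α β • β

/-- The basis vector `δ i`. -/
def δ (g : ℕ) (i : Fin g) : V g := (Pi.single i 1, 0)

/-- The basis vector `γ i`. -/
def γ (g : ℕ) (i : Fin g) : V g := (0, Pi.single i 1)

section Aux

variable {g : ℕ}

lemma symp_add_left (u v w : V g) : symp g (u + v) w = symp g u w + symp g v w := by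
  simp only [symp, Prod.fst_add, Prod.snd_add, Pi.add_apply]
  rw [← Finset.sum_add_distrib]
  exact Finset.sum_congr rfl fun i _ => by ring

lemma symp_smul_left (a : ℤ) (u w : V g) : symp g (a • u) w = a * symp g u w := by
  simp only [symp, Prod.smul_fst, Prod.smul_snd, Pi.smul_apply, smul_eq_mul]
  rw [Finset.mul_sum]
  exact Finset.sum_congr rfl fun i _ => by ring

lemma symp_add_right (u v w : V g) : symp g u (v + w) = symp g u v + symp g u w := by
  simp only [symp, Prod.fst_add, Prod.snd_add, Pi.add_apply]
  rw [← Finset.sum_add_distrib]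
  exact Finset.sum_congr rfl fun i _ => by ring

lemma symp_smul_right (a : ℤ) (u w : V g) : symp g u (a • w) = a * symp g u w := by
  simp only [symp, Prod.smul_fst, Prod.smul_snd, Pi.smul_apply, smul_eq_mul]
  rw [Finset.mul_sum]
  exact Finset.sum_congr rfl fun i _ => by ring

lemma symp_self (u : V g) : symp g u u = 0 := by
  simp [symp, mul_comm]

lemma symp_skew (u v : V g) : symp g u v = - symp g v u := by
  simp only [symp, ← Finset.sum_neg_distrib]
  exact Finset.sum_congr rfl fun i _ => by ring

/-- The transvection `T g β` as a symplectic linear automorphism. -/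
def Tlin (g : ℕ) (β : V g) : V g ≃ₗ[ℤ] V g where
  toFun := T g β
  invFun := fun α => α - symp g α β • β
  map_add' := fun x y => by
    simp only [T, symp_add_left, add_smul]; abel
  map_smul' := fun c x => by
    simp only [T, symp_smul_left, RingHom.id_apply, smul_add, mul_smul]
  left_inv := fun α => by
    simp only [T, symp_add_left, symp_smul_left, symp_self, mul_zero, add_zero, add_smul]
    abel
  right_inv := fun α => by
    have h : symp g (α - symp g α β • β) β = symp g α β := by
      rw [sub_eq_add_neg, ← neg_smul, symp_add_left, symp_smul_left, symp_self]; ring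
    show (α - symp g α β • β) + symp g (α - symp g α β • β) β • β = α
    rw [h]; abel

lemma Tlin_symp (β u v : V g) : symp g (Tlin g β u) (Tlin g β v) = symp g u v := by
  show symp g (T g β u) (T g β v) = symp g u v
  simp only [T, symp_add_left, symp_add_right, symp_smul_left, symp_smul_right, symp_self,
    mul_zero]
  have h : symp g β v = - symp g v β := symp_skew β v
  rw [h]; ring

lemma sum_single_delta_gamma (v : V g) :
    v = (∑ j, v.1 j • δ g j) + (∑ j, v.2 j • γ g j) := by
  have h1 : ∀ (f : Fin g → ℤ) (i : Fin g), (∑ j, f j * (Pi.single j (1:ℤ) : Fin g → ℤ) i) = f i := by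
    intro f i
    rw [Finset.sum_eq_single i]
    · simp
    · intro b _ hb; simp [Pi.single_apply, hb]
    · simp
  apply Prod.ext <;>
  · simp only [Prod.fst_add, Prod.snd_add, Prod.fst_sum, Prod.snd_sum, δ, γ, Prod.smul_fst,
      Prod.smul_snd, smul_zero, Finset.sum_const_zero, add_zero, zero_add]
    funext i
    simp only [Finset.sum_apply, Pi.smul_apply, smul_eq_mul]
    exact (h1 _ i).symm

lemma sum_mul_single' (f : Fin g → ℤ) (i : Fin g) :
    ∑ k, f k * (Pi.single i (1:ℤ) : Fin g → ℤ) k = f i := by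
  rw [Finset.sum_eq_single i]
  · simp
  · intro b _ hb; simp [Pi.single_apply, hb]
  · simp

lemma symp_vec_gamma (w : V g) (i : Fin g) : symp g w (γ g i) = w.1 i := by
  simp only [symp, γ, Pi.zero_apply, mul_zero, sub_zero]
  exact sum_mul_single' _ i

lemma symp_vec_delta (w : V g) (i : Fin g) : symp g w (δ g i) = -(w.2 i) := by
  simp only [symp, δ, Pi.zero_apply, mul_zero, zero_sub]
  rw [Finset.sum_neg_distrib]
  exact congrArg Neg.neg (sum_mul_single' _ i)

lemma symp_gamma_gamma (i j : Fin g) : symp g (γ g i) (γ g j) = 0 := by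
  simp [symp, γ]

end Aux

/-- Every `Sp_{2g}(ℤ)`-invariant submodule of `ℤ^{2g}` is of the form `m·V`. -/
theorem invariant_submodule_eq_smul (g : ℕ) (hg : 1 ≤ g) (W : Submodule ℤ (V g))
    (hW : ∀ φ : V g ≃ₗ[ℤ] V g, (∀ u v, symp g (φ u) (φ v) = symp g u v) →
      ∀ w ∈ W, φ w ∈ W) :
    ∃ m : ℕ, W = (m : ℤ) • (⊤ : Submodule ℤ (V g)) := by
  classical
  have key : ∀ (β w : V g), w ∈ W → symp g w β • β ∈ W := by
    intro β w hw
    have h1 : Tlin g β w ∈ W := hW (Tlin g β) (Tlin_symp β) w hw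
    have h2 : Tlin g β w = w + symp g w β • β := rfl
    have h3 := W.sub_mem h1 hw
    rwa [h2, add_sub_cancel_left] at h3
  let K : Submodule ℤ ℤ :=
    { carrier := {c | ∀ j, c • δ g j ∈ W ∧ c • γ g j ∈ W}
      add_mem' := by
        intro a b ha hb j
        exact ⟨by rw [add_smul]; exact W.add_mem (ha j).1 (hb j).1,
               by rw [add_smul]; exact W.add_mem (ha j).2 (hb j).2⟩
      zero_mem' := by intro j; simp
      smul_mem' := by
        intro r c hc j
        exact ⟨by rw [smul_eq_mul, mul_smul]; exact W.smul_mem r (hc j).1,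
               by rw [smul_eq_mul, mul_smul]; exact W.smul_mem r (hc j).2⟩ }
  have propδ : ∀ (c : ℤ) (i : Fin g), c • γ g i ∈ W → c • δ g i ∈ W := by
    intro c i h
    have h1 := key (δ g i) _ h
    rw [symp_smul_left, symp_vec_delta] at h1
    have h2 := W.neg_mem h1
    rw [← neg_smul] at h2
    have h3 : c • δ g i = -(c * -(γ g i).2 i) • δ g i := by
      simp [γ]
    rwa [h3]
  have propγ : ∀ (c : ℤ) (i : Fin g), c • δ g i ∈ W → c • γ g i ∈ W := by
    intro c i h
    have h1 := key (γ g i) _ h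
    rw [symp_smul_left, symp_vec_gamma] at h1
    have h3 : c • γ g i = (c * (δ g i).1 i) • γ g i := by simp [δ]
    rwa [h3]
  have cross : ∀ (c : ℤ) (i j : Fin g), c • γ g i ∈ W → c • γ g j ∈ W := by
    intro c i j h
    have hδ : c • δ g i ∈ W := propδ c i h
    have h1 := key (δ g i + γ g j) _ h
    have hs : symp g (c • γ g i) (δ g i + γ g j) = -c := by
      rw [symp_smul_left, symp_add_right, symp_vec_delta, symp_gamma_gamma]
      simp [γ]
    rw [hs] at h1
    have h2 := W.neg_mem h1
    rw [← neg_smul, neg_neg, smul_add] at h2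
    have h3 := W.sub_mem h2 hδ
    rwa [add_sub_cancel_left] at h3
  have memK : ∀ (c : ℤ) (i : Fin g), c • γ g i ∈ W → c ∈ K := by
    intro c i h j
    have hγj := cross c i j h
    exact ⟨propδ c j hγj, hγj⟩
  have coordK : ∀ w ∈ W, ∀ i, w.1 i ∈ K ∧ w.2 i ∈ K := by
    intro w hw i
    constructor
    · have h1 := key (γ g i) w hw
      rw [symp_vec_gamma] at h1
      exact memK _ i h1
    · have h1 := key (δ g i) w hw
      rw [symp_vec_delta] at h1
      have h2 := W.neg_mem h1
      rw [← neg_smul, neg_neg] at h2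
      exact memK _ i (propγ _ i h2)
  obtain ⟨a, ha⟩ := (IsPrincipalIdealRing.principal (K : Ideal ℤ)).principal
  refine ⟨a.natAbs, ?_⟩
  have haK : a ∈ K := by rw [ha]; exact Submodule.mem_span_singleton_self a
  have hmK : (a.natAbs : ℤ) ∈ K := by
    rcases Int.natAbs_eq a with h | h
    · rwa [← h]
    · have := K.neg_mem haK
      rwa [h, neg_neg] at this
  have hdvd : ∀ c ∈ K, (a.natAbs : ℤ) ∣ c := by
    intro c hc
    rw [ha, Submodule.mem_span_singleton] at hc
    obtain ⟨r, rfl⟩ := hc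
    exact Int.natAbs_dvd.mpr ⟨r, by rw [smul_eq_mul, mul_comm]⟩
  ext x
  constructor
  · intro hx
    set m : ℤ := (a.natAbs : ℤ) with hm
    have hd1 : ∀ i, m ∣ x.1 i := fun i => hdvd _ (coordK x hx i).1
    have hd2 : ∀ i, m ∣ x.2 i := fun i => hdvd _ (coordK x hx i).2
    have hxy : x = m • ((fun i => x.1 i / m, fun i => x.2 i / m) : V g) := by
      apply Prod.ext
      · funext i
        exact (Int.mul_ediv_cancel' (hd1 i)).symm
      · funext i
        exact (Int.mul_ediv_cancel' (hd2 i)).symm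
    rw [hxy]
    exact Submodule.smul_mem_pointwise_smul _ _ _ trivial
  · intro hx
    rw [← SetLike.mem_coe, Submodule.coe_pointwise_smul] at hx
    obtain ⟨y, -, rfl⟩ := hx
    show (a.natAbs : ℤ) • y ∈ W
    rw [sum_single_delta_gamma y, smul_add, Finset.smul_sum, Finset.smul_sum]
    apply W.add_mem <;>
    · apply Submodule.sum_mem
      intro j _
      rw [smul_comm]
      first
        | exact W.smul_mem _ (hmK j).1
        | exact W.smul_mem _ (hmK j).2
end

section
/- Let V = ℤ^{2g} with the standard symplectic form. Let W ⊆ V be a ℤ-submodule invariant under all transvections T_β with β primitive. If α = Σ_{i=1}^g (a_i δ_i + b_i γ_i) ∈ W, then for each k, a_k · γ_k ∈ W and b_k · δ_k ∈ W. -/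
open Finset Pointwise

lemma prim_delta (g : ℕ) (k : Fin g) : Primitive g (δ g k) := by
  apply Nat.dvd_one.mp
  have := Finset.gcd_dvd (Finset.mem_univ k)
    (f := fun i => Int.gcd ((δ g k).1 i) ((δ g k).2 i))
  simpa [δ, Int.gcd] using this

lemma prim_gamma (g : ℕ) (k : Fin g) : Primitive g (γ g k) := by
  apply Nat.dvd_one.mp
  have := Finset.gcd_dvd (Finset.mem_univ k)
    (f := fun i => Int.gcd ((γ g k).1 i) ((γ g k).2 i))
  simpa [γ, Int.gcd] using this

lemma diff_mem (g : ℕ) (W : Submodule ℤ (V g))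
    (hW : ∀ β : V g, Primitive g β → ∀ w ∈ W, T g β w ∈ W)
    (β : V g) (hβ : Primitive g β) (w : V g) (hw : w ∈ W) :
    symp g w β • β ∈ W := by
  have h := hW β hβ w hw
  have : T g β w - w ∈ W := W.sub_mem h hw
  simpa [T] using this

/-- If `W` is invariant under all transvections along primitive vectors and
`α = Σ aᵢ δᵢ + bᵢ γᵢ ∈ W`, then `aₖ γₖ ∈ W` and `bₖ δₖ ∈ W`. -/
theorem coords_smul_mem (g : ℕ) (hg : 1 ≤ g) (W : Submodule ℤ (V g))
    (hW : ∀ β : V g, Primitive g β → ∀ w ∈ W, T g β w ∈ W)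
    (a b : Fin g → ℤ) (hα : ((a, b) : V g) ∈ W) (k : Fin g) :
    a k • γ g k ∈ W ∧ b k • δ g k ∈ W := by
  constructor
  · have h := diff_mem g W hW (γ g k) (prim_gamma g k) (a, b) hα
    have hs : symp g ((a, b) : V g) (γ g k) = a k := by
      simp [symp, γ, Pi.single_apply, mul_comm]
    rwa [hs] at h
  · have h := diff_mem g W hW (δ g k) (prim_delta g k) (a, b) hα
    have hs : symp g ((a, b) : V g) (δ g k) = -(b k) := by
      simp [symp, δ, Pi.single_apply, mul_comm]
    rw [hs] at h
    simpa using W.neg_mem h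
end
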